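/- arXiv:1311.0333 — 5 statements merged into one kernel-verified Lean document; each statement's English description precedes it below -/
import Mathlib

section
/- Let ε be a real number with 0 < ε < 1, let n = ⌈3/ε⌉, and let F_ε be the family of semi-open intervals B_a = [a/n, (a+1)/n) for integers 0 ≤ a < n. Then for any finite sequence ξ⃗ = (ξ₁,…,ξ_N) of real numbers in [0,1], if D(F_ε, ξ⃗) < (ε/3)² then D(ξ⃗) < ε. -/
/-!
Cut `[0,1)` into the `n` cells `[a/n, (a+1)/n)`. Any interval `[u,v) ⊆ [0,1]` contains a union of
consecutive cells and is contained in another, and each of these two unions differs from `[u,v)` in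
length by less than `2/n`. If each cell's empirical frequency is within `M` of `1/n`, then a union
of at most `n` cells is within `n M` of its length, so `[u,v)` is within `2/n + n M` of its length.
For `n = ⌈3/ε⌉` and `M < (ε/3)²` this is less than `ε`, because `(nε - 3)(nε - 6) ≤ 0`.
-/

open Finset

open Classical in
noncomputable def seqDisc {N : ℕ} (ξ : Fin N → ℝ) : ℝ :=
  sSup { d : ℝ | ∃ u v : ℝ, 0 ≤ u ∧ u < v ∧ v ≤ 1 ∧
    d = |((Finset.univ.filter fun n : Fin N => u ≤ ξ n ∧ ξ n < v).card : ℝ) / N - (v - u)| }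

section Count

variable {ι : Type*} [Fintype ι] (ξ : ι → ℝ)

open Classical in
noncomputable def countIco (u v : ℝ) : ℕ := #{i | u ≤ ξ i ∧ ξ i < v}

variable {ξ}

theorem countIco_mono {u u' v v' : ℝ} (hu : u' ≤ u) (hv : v ≤ v') :
    countIco ξ u v ≤ countIco ξ u' v' :=
  card_le_card <| monotone_filter_right _ fun _ _ h => ⟨hu.trans h.1, h.2.trans_le hv⟩

theorem countIco_self (u : ℝ) : countIco ξ u u = 0 :=
  card_eq_zero.2 <| filter_eq_empty_iff.2 fun _ _ h => (h.1.trans_lt h.2).false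

theorem countIco_add {u w v : ℝ} (huw : u ≤ w) (hwv : w ≤ v) :
    countIco ξ u w + countIco ξ w v = countIco ξ u v := by
  classical
  unfold countIco
  rw [← card_union_of_disjoint (disjoint_filter.2 fun _ _ h₁ h₂ => (h₁.2.trans_le h₂.1).false),
    ← filter_or]
  congr 1
  exact filter_congr fun i _ => by grind

theorem countIco_grid_eq_sum (n : ℕ) {k m : ℕ} (hkm : k ≤ m) :
    countIco ξ (k / n) (m / n) = ∑ a ∈ Ico k m, countIco ξ (a / n) ((a + 1) / n) := by
  induction m, hkm using Nat.le_induction with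
  | base => simp [countIco_self]
  | succ m hkm ih =>
    rw [sum_Ico_succ_top hkm, ← ih, Nat.cast_succ]
    exact (countIco_add (by gcongr) (by gcongr; linarith)).symm

end Count

section Deviation

variable {N n : ℕ} {ξ : Fin N → ℝ} {M : ℝ}
  (hM : ∀ a < n, |(countIco ξ (a / n) ((a + 1) / n) : ℝ) / N - 1 / n| ≤ M)
include hM

theorem abs_countIco_grid_div_sub_le {k m : ℕ} (hkm : k ≤ m) (hmn : m ≤ n) :
    |(countIco ξ (k / n) (m / n) : ℝ) / N - ((m : ℝ) - k) / n| ≤ ((m : ℝ) - k) * M := by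
  have hsum : (countIco ξ (k / n) (m / n) : ℝ) / N - ((m : ℝ) - k) / n
      = ∑ a ∈ Ico k m, ((countIco ξ (a / n) ((a + 1) / n) : ℝ) / N - 1 / n) := by
    rw [countIco_grid_eq_sum n hkm, sum_sub_distrib, Nat.cast_sum, sum_div, sum_const,
      Nat.card_Ico, nsmul_eq_mul, Nat.cast_sub hkm, mul_one_div]
  rw [hsum]
  calc _ ≤ ∑ a ∈ Ico k m, |(countIco ξ (a / n) ((a + 1) / n) : ℝ) / N - 1 / n| :=
        abs_sum_le_sum_abs _ _
    _ ≤ ∑ _a ∈ Ico k m, M := sum_le_sum fun a ha => hM a ((mem_Ico.1 ha).2.trans_le hmn)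
    _ = ((m : ℝ) - k) * M := by rw [sum_const, Nat.card_Ico, nsmul_eq_mul, Nat.cast_sub hkm]

theorem countIco_div_le (hn : 0 < n) {u v : ℝ} (hu : 0 ≤ u) (huv : u ≤ v) (hv : v ≤ 1) :
    (countIco ξ u v : ℝ) / N ≤ v - u + (2 / n + n * M) := by
  have hn' : (0 : ℝ) < n := Nat.cast_pos.2 hn
  have hM0 : 0 ≤ M := (abs_nonneg _).trans (hM 0 hn)
  set p := ⌊u * n⌋₊
  set q := ⌈v * n⌉₊
  have hpq : p ≤ q := (Nat.floor_mono (by gcongr)).trans (Nat.floor_le_ceil _)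
  have hqn : q ≤ n := Nat.ceil_le.2 (mul_le_of_le_one_left hn'.le hv)
  have hp : (p : ℝ) / n ≤ u := (div_le_iff₀ hn').2 (Nat.floor_le (by positivity))
  have hq : v ≤ (q : ℝ) / n := (le_div_iff₀ hn').2 (Nat.le_ceil _)
  have hp' : u * n - 1 < p := Nat.sub_one_lt_floor _
  have hq' : (q : ℝ) < v * n + 1 := Nat.ceil_lt_add_one (mul_nonneg (hu.trans huv) hn'.le)
  have hlen : ((q : ℝ) - p) / n ≤ v - u + 2 / n := by
    rw [div_le_iff₀ hn', add_mul, div_mul_cancel₀ _ hn'.ne']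
    linarith
  have hgrid := (abs_le.1 (abs_countIco_grid_div_sub_le hM hpq hqn)).2
  have hqpn : (q : ℝ) - p ≤ n := (sub_le_self _ (Nat.cast_nonneg _)).trans (Nat.cast_le.2 hqn)
  calc (countIco ξ u v : ℝ) / N ≤ countIco ξ (p / n) (q / n) / N := by
        gcongr; exact countIco_mono hp hq
    _ ≤ ((q : ℝ) - p) / n + ((q : ℝ) - p) * M := by linarith
    _ ≤ v - u + (2 / n + n * M) := by linarith [mul_le_mul_of_nonneg_right hqpn hM0]

theorem le_countIco_div (hn : 0 < n) {u v : ℝ} (hu : 0 ≤ u) (huv : u ≤ v) (hv : v ≤ 1) :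
    v - u - (2 / n + n * M) ≤ (countIco ξ u v : ℝ) / N := by
  have hn' : (0 : ℝ) < n := Nat.cast_pos.2 hn
  have hM0 : 0 ≤ M := (abs_nonneg _).trans (hM 0 hn)
  set p := ⌈u * n⌉₊
  set q := ⌊v * n⌋₊
  have hp' : (p : ℝ) < u * n + 1 := Nat.ceil_lt_add_one (by positivity)
  have hq' : v * n - 1 < q := Nat.sub_one_lt_floor _
  rcases le_or_gt p q with hpq | hqp
  · have hqn : q ≤ n := Nat.floor_le_of_le (mul_le_of_le_one_left hn'.le hv)
    have hp : u ≤ (p : ℝ) / n := (le_div_iff₀ hn').2 (Nat.le_ceil _)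
    have hq : (q : ℝ) / n ≤ v :=
      (div_le_iff₀ hn').2 (Nat.floor_le (mul_nonneg (hu.trans huv) hn'.le))
    have hlen : v - u - 2 / n ≤ ((q : ℝ) - p) / n := by
      rw [le_div_iff₀ hn', sub_mul, div_mul_cancel₀ _ hn'.ne']
      linarith
    have hgrid := (abs_le.1 (abs_countIco_grid_div_sub_le hM hpq hqn)).1
    have hqpn : (q : ℝ) - p ≤ n := (sub_le_self _ (Nat.cast_nonneg _)).trans (Nat.cast_le.2 hqn)
    calc v - u - (2 / n + n * M) ≤ ((q : ℝ) - p) / n - ((q : ℝ) - p) * M := by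
          linarith [mul_le_mul_of_nonneg_right hqpn hM0]
      _ ≤ countIco ξ (p / n) (q / n) / N := by linarith
      _ ≤ (countIco ξ u v : ℝ) / N := by gcongr; exact countIco_mono hp hq
  · have hqp' : (q : ℝ) + 1 ≤ p := by exact_mod_cast hqp
    have hshort : v - u < 2 / n := by
      rw [lt_div_iff₀ hn']
      linarith
    have : 0 ≤ n * M := by positivity
    have : (0 : ℝ) ≤ (countIco ξ u v : ℝ) / N := by positivity
    linarith

theorem abs_countIco_div_sub_le (hn : 0 < n) {u v : ℝ} (hu : 0 ≤ u) (huv : u ≤ v) (hv : v ≤ 1) :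
    |(countIco ξ u v : ℝ) / N - (v - u)| ≤ 2 / n + n * M :=
  abs_sub_le_iff.2 ⟨by linarith [countIco_div_le hM hn hu huv hv],
    by linarith [le_countIco_div hM hn hu huv hv]⟩

end Deviation

theorem seqDisc_le {N : ℕ} {ξ : Fin N → ℝ} {B : ℝ}
    (hB : ∀ u v, 0 ≤ u → u < v → v ≤ 1 → |(countIco ξ u v : ℝ) / N - (v - u)| ≤ B) :
    seqDisc ξ ≤ B :=
  csSup_le ⟨_, 0, 1, le_rfl, one_pos, le_rfl, rfl⟩ fun _ ⟨u, v, hu, huv, hv, hd⟩ =>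
    hd ▸ hB u v hu huv hv

theorem Finset.exists_lt_forall_le_of_forall_lt {α β : Type*} [LinearOrder β] [NoMinOrder β]
    {s : Finset α} {f : α → β} {c : β} (h : ∀ a ∈ s, f a < c) : ∃ M < c, ∀ a ∈ s, f a ≤ M := by
  rcases s.eq_empty_or_nonempty with rfl | hs
  · obtain ⟨M, hM⟩ := exists_lt c
    exact ⟨M, hM, by simp⟩
  · exact ⟨s.sup' hs f, (sup'_lt_iff hs).2 h, fun a ha => le_sup' f ha⟩

theorem two_div_ceil_add_le {ε : ℝ} (hε0 : 0 < ε) (hε3 : ε ≤ 3) :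
    2 / ⌈3 / ε⌉₊ + ⌈3 / ε⌉₊ * (ε / 3) ^ 2 ≤ ε := by
  have hpos : (0 : ℝ) < 3 / ε := by positivity
  have hge : 3 / ε ≤ ⌈3 / ε⌉₊ := Nat.le_ceil _
  have hlt : (⌈3 / ε⌉₊ : ℝ) < 3 / ε + 1 := Nat.ceil_lt_add_one hpos.le
  set n : ℝ := (⌈3 / ε⌉₊ : ℝ)
  have hn : 0 < n := hpos.trans_le hge
  have h3 : 3 ≤ n * ε := by rwa [div_le_iff₀ hε0] at hge
  have h6 : n * ε ≤ 6 := by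
    have := mul_lt_mul_of_pos_right hlt hε0
    rw [add_mul, div_mul_cancel₀ _ hε0.ne'] at this
    linarith
  rw [div_add' _ _ _ hn.ne', div_le_iff₀ hn]
  nlinarith [mul_nonneg (sub_nonneg.2 h3) (sub_nonneg.2 h6)]

open Classical in
theorem stmt0_general (ε : ℝ) (hε0 : 0 < ε) (hε1 : ε < 1) (N : ℕ) (ξ : Fin N → ℝ)
    (h : ∀ a : ℕ, a < ⌈3 / ε⌉₊ →
      |((Finset.univ.filter fun n : Fin N =>
            (a : ℝ) / (⌈3 / ε⌉₊ : ℝ) ≤ ξ n ∧ ξ n < ((a : ℝ) + 1) / (⌈3 / ε⌉₊ : ℝ)).card : ℝ) / N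
          - 1 / (⌈3 / ε⌉₊ : ℝ)| < (ε / 3) ^ 2) :
    seqDisc ξ < ε := by
  have hn : 0 < ⌈3 / ε⌉₊ := Nat.ceil_pos.2 (by positivity)
  obtain ⟨M, hMlt, hM⟩ := Finset.exists_lt_forall_le_of_forall_lt
    (f := fun a : ℕ => |(countIco ξ (a / ⌈3 / ε⌉₊) ((a + 1) / ⌈3 / ε⌉₊) : ℝ) / N - 1 / ⌈3 / ε⌉₊|)
    (s := range ⌈3 / ε⌉₊) fun a ha => h a (mem_range.1 ha)
  replace hM := fun a ha => hM a (mem_range.2 ha)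
  calc seqDisc ξ ≤ 2 / ⌈3 / ε⌉₊ + ⌈3 / ε⌉₊ * M :=
        seqDisc_le fun u v hu huv hv => abs_countIco_div_sub_le hM hn hu huv.le hv
    _ < 2 / ⌈3 / ε⌉₊ + ⌈3 / ε⌉₊ * (ε / 3) ^ 2 := by gcongr
    _ ≤ ε := two_div_ceil_add_le hε0 (by linarith)

open Classical in
theorem stmt0 (ε : ℝ) (hε0 : 0 < ε) (hε1 : ε < 1) (N : ℕ) (hN : 0 < N)
    (ξ : Fin N → ℝ) (hξ : ∀ n, ξ n ∈ Set.Icc (0 : ℝ) 1)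
    (h : ∀ a : ℕ, a < ⌈3 / ε⌉₊ →
      |((Finset.univ.filter fun n : Fin N =>
            (a : ℝ) / (⌈3 / ε⌉₊ : ℝ) ≤ ξ n ∧ ξ n < ((a : ℝ) + 1) / (⌈3 / ε⌉₊ : ℝ)).card : ℝ) / N
          - 1 / (⌈3 / ε⌉₊ : ℝ)| < (ε / 3) ^ 2) :
    seqDisc ξ < ε :=
  stmt0_general ε hε0 hε1 N ξ h
end

section
/- Let (ξ_j)_{j≥1} be a sequence of real numbers in [0,1], let ε be a positive real number, and let (b_m)_{m≥0} be a strictly increasing sequence of positive integers. Suppose that there is an m₀ such that for all m > m₀, b_{m+1} − b_m ≤ ε·b_m and D(ξ_j : b_m < j ≤ b_{m+1}) < ε. Then limsup_{N→∞} D(ξ₁,…,ξ_N) ≤ 2ε. -/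
open Finset Filter

/-!
Fix `[u, v) ⊆ [0, 1]` and let `E(a, c)` be the number of `j ∈ (a, c]` with `ξ j ∈ [u, v)`, minus
`(v - u)(c - a)`; it is additive in the interval. Given `N ≥ b (m₀ + 1)`, let `b M ≤ N < b (M + 1)`
and split `(0, N]` at `b (m₀ + 1)` and `b M`. On the initial segment `|E| ≤ b (m₀ + 1)`; each
block `(b k, b (k + 1)]` contributes at most `ε` times its length, hence at most `ε N` in total;
and the incomplete last block has length `N - b M < b (M + 1) - b M ≤ ε b M ≤ ε N`.
So `D(ξ₁, …, ξ_N) ≤ 2ε + b (m₀ + 1) / N`, which tends to `2ε`.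
-/

lemma seqDisc_nonneg {N : ℕ} (ξ : Fin N → ℝ) : 0 ≤ seqDisc ξ :=
  Real.sSup_nonneg fun _ ⟨_, _, _, _, _, hd⟩ => hd ▸ abs_nonneg _

open Classical in
lemma abs_card_div_sub_le_seqDisc {N : ℕ} (ξ : Fin N → ℝ) {u v : ℝ}
    (hu : 0 ≤ u) (huv : u < v) (hv : v ≤ 1) :
    |((Finset.univ.filter fun n : Fin N => u ≤ ξ n ∧ ξ n < v).card : ℝ) / N - (v - u)|
      ≤ seqDisc ξ := by
  refine le_csSup ⟨1, ?_⟩ ⟨u, v, hu, huv, hv, rfl⟩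
  rintro _ ⟨u', v', hu', huv', hv', rfl⟩
  refine abs_sub_le_of_nonneg_of_le (by positivity) (div_le_one_of_le₀ ?_ (by positivity))
    (by linarith) (by linarith)
  exact_mod_cast (card_filter_le _ _).trans (by simp)

open Classical in
lemma seqDisc_le_of_forall {N : ℕ} (ξ : Fin N → ℝ) {C : ℝ}
    (h : ∀ u v : ℝ, 0 ≤ u → u < v → v ≤ 1 →
      |((Finset.univ.filter fun n : Fin N => u ≤ ξ n ∧ ξ n < v).card : ℝ) / N - (v - u)| ≤ C) :
    seqDisc ξ ≤ C :=
  csSup_le ⟨_, 0, 1, le_rfl, one_pos, le_rfl, rfl⟩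
    fun _ ⟨u, v, hu, huv, hv, hd⟩ => hd ▸ h u v hu huv hv

lemma StrictMono.exists_le_lt_succ {b : ℕ → ℕ} (hb : StrictMono b) {p N : ℕ} (hp : b p ≤ N) :
    ∃ M, p ≤ M ∧ b M ≤ N ∧ N < b (M + 1) := by
  have hex : ∃ m, N < b m := ⟨N + 1, Nat.lt_of_lt_of_le N.lt_succ_self hb.le_apply⟩
  have hpos : p < Nat.find hex := by
    by_contra! hle
    exact (Nat.find_spec hex).not_ge ((hb.monotone hle).trans hp)
  refine ⟨Nat.find hex - 1, by omega, not_lt.1 (Nat.find_min hex (by omega)), ?_⟩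
  rw [Nat.sub_add_cancel (by omega)]
  exact Nat.find_spec hex

section Counting

variable (ξ : ℕ → ℝ) (u v : ℝ)

noncomputable def countIoc (a c : ℕ) : ℕ := #{n ∈ Ioc a c | u ≤ ξ n ∧ ξ n < v}

noncomputable def countError (a c : ℕ) : ℝ := countIoc ξ u v a c - (v - u) * ((c : ℝ) - a)

variable {ξ u v}

lemma countIoc_le (a c : ℕ) : countIoc ξ u v a c ≤ c - a :=
  (card_filter_le _ _).trans (Nat.card_Ioc a c).le

lemma countIoc_add {a c e : ℕ} (hac : a ≤ c) (hce : c ≤ e) :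
    countIoc ξ u v a c + countIoc ξ u v c e = countIoc ξ u v a e := by
  rw [countIoc, countIoc, ← card_union_of_disjoint, ← filter_union, Ioc_union_Ioc_eq_Ioc hac hce,
    countIoc]
  exact disjoint_filter_filter (Ioc_disjoint_Ioc_of_le le_rfl)

lemma countError_add {a c e : ℕ} (hac : a ≤ c) (hce : c ≤ e) :
    countError ξ u v a c + countError ξ u v c e = countError ξ u v a e := by
  simp only [countError, ← countIoc_add hac hce, Nat.cast_add]
  ring

lemma abs_countError_le (huv : u ≤ v) (hvu : v - u ≤ 1) {a c : ℕ} (hac : a ≤ c) :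
    |countError ξ u v a c| ≤ (c : ℝ) - a := by
  have hlen : (0 : ℝ) ≤ (c : ℝ) - a := sub_nonneg.2 (by exact_mod_cast hac)
  refine abs_sub_le_of_nonneg_of_le (Nat.cast_nonneg _) ?_ (by nlinarith) (by nlinarith)
  rw [← Nat.cast_sub hac]
  exact_mod_cast countIoc_le a c

open Classical in
lemma card_filter_shift_eq_countIoc (a M : ℕ) :
    (Finset.univ.filter fun i : Fin M => u ≤ ξ (a + 1 + (i : ℕ)) ∧ ξ (a + 1 + (i : ℕ)) < v).card
      = countIoc ξ u v a (a + M) := by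
  refine card_bij (fun i _ => a + 1 + (i : ℕ)) ?_ (fun i _ j _ hij => Fin.ext (by omega)) ?_
  · intro i hi
    simp only [mem_filter, mem_univ, true_and] at hi
    simp only [mem_filter, mem_Ioc]
    exact ⟨⟨by omega, by omega⟩, hi⟩
  · intro n hn
    simp only [mem_filter, mem_Ioc] at hn
    refine ⟨⟨n - a - 1, by omega⟩, ?_, by simp only; omega⟩
    simpa only [mem_filter, mem_univ, true_and, show a + 1 + (n - a - 1) = n by omega] using hn.2

lemma abs_countError_le_of_seqDisc_le (hu : 0 ≤ u) (huv : u < v) (hv : v ≤ 1)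
    {a c : ℕ} (hac : a < c) {δ : ℝ}
    (hD : seqDisc (fun i : Fin (c - a) => ξ (a + 1 + (i : ℕ))) ≤ δ) :
    |countError ξ u v a c| ≤ δ * ((c : ℝ) - a) := by
  have hlen : (0 : ℝ) < (c : ℝ) - a := sub_pos.2 (by exact_mod_cast hac)
  have hdisc := (abs_card_div_sub_le_seqDisc _ hu huv hv).trans hD
  rw [card_filter_shift_eq_countIoc, Nat.add_sub_cancel' hac.le, Nat.cast_sub hac.le] at hdisc
  have hE : countError ξ u v a c
      = (countIoc ξ u v a c / ((c : ℝ) - a) - (v - u)) * ((c : ℝ) - a) := by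
    rw [countError]
    field_simp
  rw [hE, abs_mul, abs_of_pos hlen]
  exact mul_le_mul_of_nonneg_right hdisc hlen.le

lemma abs_countError_le_of_blocks {b : ℕ → ℕ} (hb : Monotone b) {δ : ℝ} {p q : ℕ} (hpq : p ≤ q)
    (h : ∀ k, p ≤ k → k < q →
      |countError ξ u v (b k) (b (k + 1))| ≤ δ * ((b (k + 1) : ℝ) - b k)) :
    |countError ξ u v (b p) (b q)| ≤ δ * ((b q : ℝ) - b p) := by
  induction q, hpq using Nat.le_induction with
  | base => simp [countError, countIoc]
  | succ q hpq ih =>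
    rw [← countError_add (hb hpq) (hb q.le_succ)]
    calc _ ≤ |countError ξ u v (b p) (b q)| + |countError ξ u v (b q) (b (q + 1))| :=
          abs_add_le _ _
      _ ≤ δ * ((b q : ℝ) - b p) + δ * ((b (q + 1) : ℝ) - b q) :=
          add_le_add (ih fun k hk hkq => h k hk (by omega)) (h q hpq q.lt_succ_self)
      _ = δ * ((b (q + 1) : ℝ) - b p) := by ring

end Counting

lemma seqDisc_le_of_countError_le {ξ : ℕ → ℝ} {N : ℕ} (hN : 0 < N) {C : ℝ}
    (h : ∀ u v : ℝ, 0 ≤ u → u < v → v ≤ 1 → |countError ξ u v 0 N| ≤ C * N) :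
    seqDisc (fun i : Fin N => ξ (1 + (i : ℕ))) ≤ C := by
  have hNR : (0 : ℝ) < N := by exact_mod_cast hN
  refine seqDisc_le_of_forall _ fun u v hu huv hv => ?_
  have hcard := card_filter_shift_eq_countIoc (ξ := ξ) (u := u) (v := v) 0 N
  simp only [zero_add] at hcard
  have hE : (countIoc ξ u v 0 N : ℝ) / N - (v - u) = countError ξ u v 0 N / N := by
    rw [countError]
    field_simp
    ring
  rw [hcard, hE, abs_div, abs_of_pos hNR, div_le_iff₀ hNR]
  exact h u v hu huv hv

lemma seqDisc_le_two_mul_add_of_blocks {ξ : ℕ → ℝ} {ε : ℝ} (hε : 0 ≤ ε) {b : ℕ → ℕ}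
    (hb : StrictMono b) {m₀ : ℕ}
    (hm : ∀ m > m₀, ((b (m + 1) : ℝ) - b m ≤ ε * b m) ∧
      seqDisc (fun i : Fin (b (m + 1) - b m) => ξ (b m + 1 + (i : ℕ))) < ε)
    {N : ℕ} (hN0 : 0 < N) (hN : b (m₀ + 1) ≤ N) :
    seqDisc (fun i : Fin N => ξ (1 + (i : ℕ))) ≤ 2 * ε + b (m₀ + 1) / N := by
  obtain ⟨M, hM, hbM, hNM⟩ := hb.exists_le_lt_succ hN
  refine seqDisc_le_of_countError_le hN0 fun u v hu huv hv => ?_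
  set B := b (m₀ + 1)
  have hBM : (B : ℝ) ≤ b M := by exact_mod_cast hb.monotone hM
  have hbMN : (b M : ℝ) ≤ N := by exact_mod_cast hbM
  have hinit : |countError ξ u v 0 B| ≤ B := by
    simpa using abs_countError_le huv.le (by linarith) (Nat.zero_le B)
  have hblocks : |countError ξ u v B (b M)| ≤ ε * ((b M : ℝ) - B) :=
    abs_countError_le_of_blocks hb.monotone hM fun k hk _ =>
      abs_countError_le_of_seqDisc_le hu huv hv (hb k.lt_succ_self) (hm k hk).2.le
  have htail : |countError ξ u v (b M) N| ≤ ε * b M :=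
    calc _ ≤ (N : ℝ) - b M := abs_countError_le huv.le (by linarith) hbM
      _ ≤ (b (M + 1) : ℝ) - b M := by gcongr
      _ ≤ ε * b M := (hm M hM).1
  rw [← countError_add (Nat.zero_le _) hbM, ← countError_add (Nat.zero_le B) (hb.monotone hM)]
  calc _ ≤ |countError ξ u v 0 B| + |countError ξ u v B (b M)| + |countError ξ u v (b M) N| :=
        abs_add_three _ _ _
    _ ≤ B + ε * ((b M : ℝ) - B) + ε * b M := by gcongr
    _ ≤ 2 * ε * N + B := by nlinarith
    _ = (2 * ε + B / N) * N := by field_simp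

/- The sequence `(ξ_j)_{j ≥ 1}` is given by `ξ : ℕ → ℝ`, where `ξ j` is the `j`-th term for
`j ≥ 1`.  `D(ξ_j : a < j ≤ b)` is `seqDisc (fun i : Fin (b - a) => ξ (a + 1 + i))`, and
`D(ξ₁, …, ξ_N)` is `seqDisc (fun i : Fin N => ξ (1 + i))`. -/
theorem stmt3_general (ξ : ℕ → ℝ)
    (ε : ℝ) (hε : 0 < ε) (b : ℕ → ℕ) (hb : StrictMono b)
    (h : ∃ m₀ : ℕ, ∀ m > m₀,
      ((b (m + 1) : ℝ) - b m ≤ ε * b m) ∧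
      seqDisc (fun i : Fin (b (m + 1) - b m) => ξ (b m + 1 + (i : ℕ))) < ε) :
    Filter.limsup (fun N : ℕ => seqDisc (fun i : Fin N => ξ (1 + (i : ℕ)))) Filter.atTop
      ≤ 2 * ε := by
  obtain ⟨m₀, hm⟩ := h
  set g : ℕ → ℝ := fun N => 2 * ε + b (m₀ + 1) / N
  have hbound : ∀ᶠ N in atTop, seqDisc (fun i : Fin N => ξ (1 + (i : ℕ))) ≤ g N :=
    eventually_atTop.2 ⟨b (m₀ + 1) + 1, fun N hN =>
      seqDisc_le_two_mul_add_of_blocks hε.le hb hm (by omega) (by omega)⟩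
  have hg : Tendsto g atTop (nhds (2 * ε)) := by
    simpa using tendsto_const_nhds.add (tendsto_const_div_atTop_nhds_zero_nat (b (m₀ + 1) : ℝ))
  calc _ ≤ limsup g atTop :=
        limsup_le_limsup hbound (isCoboundedUnder_le_of_le atTop fun _ => seqDisc_nonneg _)
          hg.isBoundedUnder_le
    _ = 2 * ε := hg.limsup_eq

theorem stmt3 (ξ : ℕ → ℝ) (hξ : ∀ j, ξ j ∈ Set.Icc (0 : ℝ) 1)
    (ε : ℝ) (hε : 0 < ε) (b : ℕ → ℕ) (hb : StrictMono b) (hbpos : ∀ m, 0 < b m)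
    (h : ∃ m₀ : ℕ, ∀ m > m₀,
      ((b (m + 1) : ℝ) - b m ≤ ε * b m) ∧
      seqDisc (fun i : Fin (b (m + 1) - b m) => ξ (b m + 1 + (i : ℕ))) < ε) :
    Filter.limsup (fun N : ℕ => seqDisc (fun i : Fin N => ξ (1 + (i : ℕ)))) Filter.atTop
      ≤ 2 * ε :=
  stmt3_general ξ ε hε b hb h
end

section
/- For any base s, any positive integer ℓ, and any positive real numbers ε and δ, there is an N₀ such that for all N ≥ N₀ the number of strings v ∈ {0,…,s−1}^N with discrete discrepancy C(ℓ,v) ≥ ε is strictly less than δ·s^N. -/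
open Finset

/- `occ w u` is the number of occurrences of the block `u` (of length `ℓ`) in the string
`w` (of length `N`). -/
open Classical in
noncomputable def occ {s N : ℕ} (w : Fin N → Fin s) {ℓ : ℕ} (u : Fin ℓ → Fin s) : ℕ :=
  ((Finset.range (N + 1 - ℓ)).filter fun i =>
    ∀ (j : Fin ℓ) (h : i + (j : ℕ) < N), w ⟨i + (j : ℕ), h⟩ = u j).card

/- `discreteDisc ℓ w = C(ℓ, w) = max_{u ∈ {0,…,s−1}^ℓ} |occ(w,u)/N − s^{−ℓ}|`. -/
noncomputable def discreteDisc {s N : ℕ} (ℓ : ℕ) (w : Fin N → Fin s) : ℝ :=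
  sSup { d : ℝ | ∃ u : Fin ℓ → Fin s, d = |(occ w u : ℝ) / N - ((s : ℝ) ^ ℓ)⁻¹| }


/-! Second-moment method. For a fixed block `u`, `occ w u` is a sum of `N + 1 - ℓ` window
indicators. Two windows that do not overlap constrain disjoint sets of positions, so over all
strings their indicators are uncorrelated, and each window overlaps at most `2ℓ` others; hence
the variance of `occ · u` is `O(ℓ N)`. A discrepancy `≥ ε` forces some `occ · u` to deviate by
about `ε N` from its mean, so Chebyshev's inequality and a union bound over the `s ^ ℓ` blocks
bound the proportion of such strings by `8 ℓ s ^ ℓ / (ε ^ 2 N)`. -/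
open Function

theorem card_filter_comp_eq_of_injective {α β γ : Type*} [Fintype α] [Fintype β] [DecidableEq β]
    [Fintype γ] [DecidableEq γ] {g : α → β} (hg : Injective g) (f : α → γ) :
    #{w : β → γ | ∀ a, w (g a) = f a} = Fintype.card γ ^ (Fintype.card β - Fintype.card α) := by
  classical
  let e : {w : β → γ // ∀ a, w (g a) = f a} ≃ ({b // b ∉ Set.range g} → γ) :=
    { toFun := fun w b => w.1 b
      invFun := fun h => ⟨fun b => if hb : b ∈ Set.range g then f hb.choose else h ⟨b, hb⟩,
        fun a => by simp [hg (Set.mem_range_self (f := g) a).choose_spec]⟩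
      left_inv := fun w => by
        ext b
        by_cases hb : b ∈ Set.range g
        · simp only [hb, dite_true]
          rw [← w.2, hb.choose_spec]
        · simp [hb]
      right_inv := fun h => by
        ext b
        simp [b.2] }
  rw [← Fintype.card_subtype, Fintype.card_congr e, Fintype.card_fun, Fintype.card_subtype_compl,
    Set.card_range_of_injective hg]

theorem Finset.sum_sub_sq_eq {ι : Type*} (S : Finset ι) (f : ι → ℝ) (c : ℝ) :
    ∑ x ∈ S, (f x - c) ^ 2 = ∑ x ∈ S, f x ^ 2 - 2 * c * ∑ x ∈ S, f x + #S * c ^ 2 := by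
  have h : ∀ x, (f x - c) ^ 2 = f x ^ 2 - 2 * c * f x + c ^ 2 := fun x => by ring
  simp only [h, sum_add_distrib, sum_sub_distrib, sum_const, nsmul_eq_mul, mul_sum]

theorem Finset.card_filter_le_abs_sub_mul_sq_le {ι : Type*} (S : Finset ι) (f : ι → ℝ)
    (c : ℝ) {t : ℝ} (ht : 0 ≤ t) [DecidablePred fun x => t ≤ |f x - c|] :
    #{x ∈ S | t ≤ |f x - c|} * t ^ 2 ≤ ∑ x ∈ S, (f x - c) ^ 2 := by
  calc #{x ∈ S | t ≤ |f x - c|} * t ^ 2 = ∑ x ∈ S with t ≤ |f x - c|, t ^ 2 := by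
        rw [sum_const, nsmul_eq_mul]
    _ ≤ ∑ x ∈ S with t ≤ |f x - c|, (f x - c) ^ 2 :=
        sum_le_sum fun x hx => by
          rw [← sq_abs (f x - c)]
          exact pow_le_pow_left₀ ht (mem_filter.1 hx).2 2
    _ ≤ ∑ x ∈ S, (f x - c) ^ 2 :=
        sum_le_sum_of_subset_of_nonneg (filter_subset _ _) fun _ _ _ => sq_nonneg _

theorem cast_pos_of_pos_le_mul {N : ℕ} {a ε : ℝ} (ha : 0 < a) (h : a ≤ ε * N) : (0 : ℝ) < N := by
  rcases Nat.eq_zero_or_pos N with rfl | hN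
  · simp only [CharP.cast_eq_zero, mul_zero] at h; linarith
  · exact_mod_cast hN

theorem card_filter_near_le (M ℓ : ℕ) :
    #{p ∈ range M ×ˢ range M | p.1 < p.2 + ℓ ∧ p.2 < p.1 + ℓ} ≤ M * (2 * ℓ) := by
  calc _ ≤ #((range M ×ˢ range (2 * ℓ)).image fun q => (q.1, q.1 + q.2 + 1 - ℓ)) := by
        refine card_le_card fun p hp => ?_
        -- `p.2 = p.1 + d + 1 - ℓ` with `d < 2ℓ` ranges over `(p.1 - ℓ, p.1 + ℓ)`
        simp only [mem_filter, mem_product, mem_range] at hp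
        simp only [mem_image, mem_product, mem_range, Prod.exists]
        exact ⟨p.1, p.2 + ℓ - 1 - p.1, by omega, Prod.ext rfl (by dsimp only; omega)⟩
    _ ≤ M * (2 * ℓ) := card_image_le.trans (by simp)

/-- Positions past the end of `w` are unconstrained, which is harmless because `occ` only
looks at windows `i + ℓ ≤ N`. -/
def MatchesAt {α : Type*} {N ℓ : ℕ} (w : Fin N → α) (u : Fin ℓ → α) (i : ℕ) : Prop :=
  ∀ (j : Fin ℓ) (h : i + (j : ℕ) < N), w ⟨i + (j : ℕ), h⟩ = u j

open Classical in
theorem occ_eq_card_filter_matchesAt {s N ℓ : ℕ} (w : Fin N → Fin s) (u : Fin ℓ → Fin s) :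
    occ w u = #{i ∈ range (N + 1 - ℓ) | MatchesAt w u i} := by
  unfold occ MatchesAt
  congr

theorem matchesAt_iff {α : Type*} {N ℓ i : ℕ} (hi : i + ℓ ≤ N) (w : Fin N → α) (u : Fin ℓ → α) :
    MatchesAt w u i ↔ ∀ j, w (Fin.castLE hi (Fin.natAdd i j)) = u j :=
  forall_congr' fun j => ⟨fun h => h (by omega), fun h _ => h⟩

theorem castLE_natAdd_injective {N ℓ i : ℕ} (hi : i + ℓ ≤ N) :
    Injective fun j : Fin ℓ => Fin.castLE hi (Fin.natAdd i j) :=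
  (Fin.castLE_injective hi).comp (Fin.natAdd_injective ℓ i)

section Occurrences

variable {s N ℓ : ℕ}

open Classical in
theorem card_filter_matchesAt (u : Fin ℓ → Fin s) {i : ℕ} (hi : i + ℓ ≤ N) :
    #{w : Fin N → Fin s | MatchesAt w u i} = s ^ (N - ℓ) := by
  simp_rw [matchesAt_iff hi]
  convert card_filter_comp_eq_of_injective (castLE_natAdd_injective hi) u <;> simp

open Classical in
theorem card_filter_matchesAt_and_matchesAt (u : Fin ℓ → Fin s) {i k : ℕ}
    (hik : i + ℓ ≤ k) (hk : k + ℓ ≤ N) :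
    #{w : Fin N → Fin s | MatchesAt w u i ∧ MatchesAt w u k} = s ^ (N - (ℓ + ℓ)) := by
  have hi : i + ℓ ≤ N := by omega
  have hg := (castLE_natAdd_injective hi).sumElim (castLE_natAdd_injective hk)
    fun a b h => by have := congrArg Fin.val h; simp only [Fin.val_castLE, Fin.val_natAdd] at this; omega
  simp_rw [matchesAt_iff hi, matchesAt_iff hk]
  convert card_filter_comp_eq_of_injective hg (Sum.elim u u) using 2 <;> simp [Sum.forall]

open Classical in
theorem card_filter_matchesAt_and_matchesAt_le (u : Fin ℓ → Fin s) {i k : ℕ}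
    (hi : i + ℓ ≤ N) (hk : k + ℓ ≤ N) :
    #{w : Fin N → Fin s | MatchesAt w u i ∧ MatchesAt w u k}
      ≤ if i < k + ℓ ∧ k < i + ℓ then s ^ (N - ℓ) else s ^ (N - (ℓ + ℓ)) := by
  split_ifs with hnear
  · exact (card_le_card (monotone_filter_right _ fun _ _ => And.left)).trans
      (card_filter_matchesAt u hi).le
  · rcases (by omega : i + ℓ ≤ k ∨ k + ℓ ≤ i) with hik | hki
    · exact (card_filter_matchesAt_and_matchesAt u hik hk).le
    · simp_rw [and_comm (a := MatchesAt _ u i)]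
      exact (card_filter_matchesAt_and_matchesAt u hki hi).le

open Classical in
theorem sum_occ (u : Fin ℓ → Fin s) (hN : ℓ ≤ N) :
    ∑ w : Fin N → Fin s, occ w u = (N + 1 - ℓ) * s ^ (N - ℓ) := by
  simp_rw [occ_eq_card_filter_matchesAt]
  have hswap := sum_card_bipartiteAbove_eq_sum_card_bipartiteBelow
    (fun (w : Fin N → Fin s) i => MatchesAt w u i) (s := univ) (t := range (N + 1 - ℓ))
  simp only [bipartiteAbove, bipartiteBelow] at hswap
  rw [hswap, sum_congr rfl fun i hi => card_filter_matchesAt u (by rw [mem_range] at hi; omega)]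
  simp

open Classical in
theorem sum_occ_sq_le (u : Fin ℓ → Fin s) (hN : ℓ ≤ N) :
    ∑ w : Fin N → Fin s, occ w u ^ 2
      ≤ (N + 1 - ℓ) ^ 2 * s ^ (N - (ℓ + ℓ)) + (N + 1 - ℓ) * (2 * ℓ) * s ^ (N - ℓ) := by
  set M := N + 1 - ℓ
  set P := range M ×ˢ range M
  have hsq : ∀ w : Fin N → Fin s,
      occ w u ^ 2 = #{p ∈ P | MatchesAt w u p.1 ∧ MatchesAt w u p.2} := fun w => by
    rw [filter_product, card_product, occ_eq_card_filter_matchesAt, sq]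
  have hswap := sum_card_bipartiteAbove_eq_sum_card_bipartiteBelow
    (fun (w : Fin N → Fin s) (p : ℕ × ℕ) => MatchesAt w u p.1 ∧ MatchesAt w u p.2)
    (s := univ) (t := P)
  simp only [bipartiteAbove, bipartiteBelow] at hswap
  calc ∑ w : Fin N → Fin s, occ w u ^ 2
      = ∑ p ∈ P, #{w : Fin N → Fin s | MatchesAt w u p.1 ∧ MatchesAt w u p.2} := by
        simp_rw [hsq, hswap]
    _ ≤ ∑ p ∈ P, if p.1 < p.2 + ℓ ∧ p.2 < p.1 + ℓ then s ^ (N - ℓ) else s ^ (N - (ℓ + ℓ)) :=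
        sum_le_sum fun p hp => by
          simp only [P, mem_product, mem_range] at hp
          exact card_filter_matchesAt_and_matchesAt_le u (by omega) (by omega)
    _ ≤ _ := by
        rw [sum_ite, sum_const, sum_const, smul_eq_mul, smul_eq_mul, add_comm]
        gcongr
        · exact (card_filter_le _ _).trans (by simp [P, sq])
        · exact card_filter_near_le M ℓ

theorem sum_occ_sub_sq_le (hs : 1 ≤ s) (u : Fin ℓ → Fin s) (hN : ℓ + ℓ ≤ N) :
    ∑ w : Fin N → Fin s, ((occ w u : ℝ) - ((N + 1 - ℓ : ℕ) : ℝ) / (s : ℝ) ^ ℓ) ^ 2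
      ≤ 2 * ℓ * N * (s : ℝ) ^ N := by
  set M := N + 1 - ℓ
  set q : ℝ := (s : ℝ) ^ ℓ
  set X : ℝ := (s : ℝ) ^ (N - (ℓ + ℓ))
  have hq : 1 ≤ q := one_le_pow₀ (by exact_mod_cast hs)
  have hX : 0 ≤ X := by positivity
  have hNℓ : (s : ℝ) ^ (N - ℓ) = X * q := by rw [← pow_add]; congr 1; omega
  have hNN : (s : ℝ) ^ N = X * q * q := by rw [← pow_add, ← pow_add]; congr 1; omega
  have h1 : ∑ w : Fin N → Fin s, (occ w u : ℝ) = M * (X * q) := by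
    rw [← hNℓ]; exact_mod_cast sum_occ u (by omega)
  have h2 : ∑ w : Fin N → Fin s, (occ w u : ℝ) ^ 2 ≤ M ^ 2 * X + M * (2 * ℓ) * (X * q) := by
    rw [← hNℓ]; simp only [X]; exact_mod_cast sum_occ_sq_le (N := N) u (by omega)
  have hcard : (#(univ : Finset (Fin N → Fin s)) : ℝ) = X * q * q := by
    rw [← hNN, card_univ, Fintype.card_fun]; simp
  have hM : (ℓ : ℝ) * M ≤ ℓ * N := by
    rcases Nat.eq_zero_or_pos ℓ with h | h
    · simp [h]
    · gcongr; exact_mod_cast (by omega : M ≤ N)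
  rw [Finset.sum_sub_sq_eq, h1, hcard, hNN]
  calc ∑ w : Fin N → Fin s, (occ w u : ℝ) ^ 2 - 2 * (M / q) * (M * (X * q))
        + X * q * q * (M / q) ^ 2
      = ∑ w : Fin N → Fin s, (occ w u : ℝ) ^ 2 - M ^ 2 * X := by
        field_simp; ring
    _ ≤ 2 * (ℓ * M) * X * q := by linarith
    _ ≤ 2 * (ℓ * N) * X * q * q := by
        have : 0 ≤ (ℓ : ℝ) * M := by positivity
        nlinarith [mul_nonneg (mul_nonneg this hX) (sub_nonneg.2 hq)]
    _ = 2 * ℓ * N * (X * q * q) := by ring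

theorem exists_discreteDisc_eq (hs : 1 ≤ s) (v : Fin N → Fin s) :
    ∃ u : Fin ℓ → Fin s, discreteDisc ℓ v = |(occ v u : ℝ) / N - ((s : ℝ) ^ ℓ)⁻¹| := by
  have : Nonempty (Fin s) := ⟨⟨0, hs⟩⟩
  set g : (Fin ℓ → Fin s) → ℝ := fun u => |(occ v u : ℝ) / N - ((s : ℝ) ^ ℓ)⁻¹|
  have hrange : {d : ℝ | ∃ u, d = g u} = Set.range g := by ext; simp [eq_comm]
  obtain ⟨u, hu⟩ := (Set.range_nonempty g).csSup_mem (Set.finite_range g)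
  exact ⟨u, by rw [discreteDisc, hrange, ← hu]⟩

theorem half_mul_le_abs_occ_sub (hs : 1 ≤ s) (hN : ℓ ≤ N) {ε : ℝ} (hεN : 2 * (ℓ + 1) ≤ ε * N)
    (v : Fin N → Fin s) (u : Fin ℓ → Fin s) (h : ε ≤ |(occ v u : ℝ) / N - ((s : ℝ) ^ ℓ)⁻¹|) :
    ε * N / 2 ≤ |(occ v u : ℝ) - ((N + 1 - ℓ : ℕ) : ℝ) / (s : ℝ) ^ ℓ| := by
  set q : ℝ := (s : ℝ) ^ ℓ
  have hq : 1 ≤ q := one_le_pow₀ (by exact_mod_cast hs)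
  have hN0 : (0 : ℝ) < N := cast_pos_of_pos_le_mul (by positivity) hεN
  have hfar : ε * N ≤ |(occ v u : ℝ) - N / q| := by
    rw [show (occ v u : ℝ) - N / q = ((occ v u : ℝ) / N - q⁻¹) * N by field_simp, abs_mul,
      abs_of_pos hN0]
    gcongr
  have hshift : |((N + 1 - ℓ : ℕ) : ℝ) / q - N / q| ≤ ℓ + 1 := by
    have hM : ((N + 1 - ℓ : ℕ) : ℝ) - N = 1 - ℓ := by
      rw [Nat.cast_sub (by omega)]; push_cast; ring
    rw [← sub_div, hM, abs_div, abs_of_pos (by linarith : 0 < q)]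
    calc |1 - (ℓ : ℝ)| / q ≤ |1 - (ℓ : ℝ)| := div_le_self (abs_nonneg _) hq
      _ ≤ ℓ + 1 := abs_le.2 ⟨by linarith, by linarith [(Nat.cast_nonneg ℓ : (0 : ℝ) ≤ ℓ)]⟩
  linarith [abs_sub_le (occ v u : ℝ) (((N + 1 - ℓ : ℕ) : ℝ) / q) (N / q)]

open Classical in
theorem card_filter_le_discreteDisc_mul_le (hs : 1 ≤ s) (hN : ℓ + ℓ ≤ N) {ε : ℝ}
    (hεN : 2 * (ℓ + 1) ≤ ε * N) :
    #{v : Fin N → Fin s | ε ≤ discreteDisc ℓ v} * (ε ^ 2 * N)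
      ≤ 8 * ℓ * (s : ℝ) ^ ℓ * (s : ℝ) ^ N := by
  set c : ℝ := ((N + 1 - ℓ : ℕ) : ℝ) / (s : ℝ) ^ ℓ
  set t := ε * N / 2
  set bad : (Fin ℓ → Fin s) → Finset (Fin N → Fin s) := fun u => {v | t ≤ |(occ v u : ℝ) - c|}
  have hcover : ({v | ε ≤ discreteDisc ℓ v} : Finset (Fin N → Fin s)) ⊆ univ.biUnion bad :=
    fun v hv => by
      obtain ⟨u, hu⟩ := exists_discreteDisc_eq (ℓ := ℓ) hs v
      rw [mem_filter, hu] at hv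
      simpa [bad] using ⟨u, half_mul_le_abs_occ_sub hs (by omega) hεN v u hv.2⟩
  have hN0 : (0 : ℝ) < N := cast_pos_of_pos_le_mul (by positivity) hεN
  have ht : 0 ≤ t := by simp only [t]; linarith [(Nat.cast_nonneg ℓ : (0 : ℝ) ≤ ℓ)]
  have hcheb : #{v : Fin N → Fin s | ε ≤ discreteDisc ℓ v} * t ^ 2
      ≤ (s : ℝ) ^ ℓ * (2 * ℓ * N * (s : ℝ) ^ N) :=
    calc #{v : Fin N → Fin s | ε ≤ discreteDisc ℓ v} * t ^ 2
        ≤ (∑ u, (#(bad u) : ℝ)) * t ^ 2 := by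
          gcongr; exact_mod_cast (card_le_card hcover).trans card_biUnion_le
      _ = ∑ u, (#(bad u) : ℝ) * t ^ 2 := sum_mul _ _ _
      _ ≤ ∑ u : Fin ℓ → Fin s, ∑ v : Fin N → Fin s, ((occ v u : ℝ) - c) ^ 2 :=
          sum_le_sum fun u _ => card_filter_le_abs_sub_mul_sq_le _ _ _ ht
      _ ≤ ∑ u : Fin ℓ → Fin s, 2 * ℓ * N * (s : ℝ) ^ N :=
          sum_le_sum fun u _ => sum_occ_sub_sq_le hs u hN
      _ = (s : ℝ) ^ ℓ * (2 * ℓ * N * (s : ℝ) ^ N) := by simp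
  refine le_of_mul_le_mul_right ?_ (by positivity : (0 : ℝ) < N / 4)
  calc _ = #{v : Fin N → Fin s | ε ≤ discreteDisc ℓ v} * t ^ 2 := by ring
    _ ≤ _ := hcheb
    _ = _ := by ring

end Occurrences

open Classical in
theorem stmt8_general (s : ℕ) (hs : 2 ≤ s) (ℓ : ℕ)
    (ε δ : ℝ) (hε : 0 < ε) (hδ : 0 < δ) :
    ∃ N₀ : ℕ, ∀ N ≥ N₀,
      (((Finset.univ : Finset (Fin N → Fin s)).filter fun v =>
          ε ≤ discreteDisc ℓ v).card : ℝ) < δ * (s : ℝ) ^ N := by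
  obtain ⟨n, hn⟩ := exists_nat_gt (max (8 * ℓ * (s : ℝ) ^ ℓ / (ε ^ 2 * δ)) (2 * (ℓ + 1) / ε))
  refine ⟨max n (ℓ + ℓ), fun N hN => ?_⟩
  obtain ⟨hn₁, hn₂⟩ := max_lt_iff.1 hn
  have hnN : (n : ℝ) ≤ N := by exact_mod_cast le_of_max_le_left hN
  have hεN : 2 * (ℓ + 1) ≤ ε * N := by rw [← div_le_iff₀' hε]; linarith
  have hlarge : 8 * ℓ * (s : ℝ) ^ ℓ < ε ^ 2 * δ * N := by
    rw [← div_lt_iff₀' (by positivity)]; linarith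
  have hN0 : (0 : ℝ) < N := cast_pos_of_pos_le_mul (by positivity) hεN
  refine lt_of_mul_lt_mul_right ?_ (by positivity : (0 : ℝ) ≤ ε ^ 2 * N)
  calc _ ≤ 8 * ℓ * (s : ℝ) ^ ℓ * (s : ℝ) ^ N :=
        card_filter_le_discreteDisc_mul_le (by omega) (le_of_max_le_right hN) hεN
    _ < ε ^ 2 * δ * N * (s : ℝ) ^ N := by gcongr
    _ = δ * (s : ℝ) ^ N * (ε ^ 2 * N) := by ring

open Classical in
theorem stmt8 (s : ℕ) (hs : 2 ≤ s) (ℓ : ℕ) (hℓ : 0 < ℓ)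
    (ε δ : ℝ) (hε : 0 < ε) (hδ : 0 < δ) :
    ∃ N₀ : ℕ, ∀ N ≥ N₀,
      (((Finset.univ : Finset (Fin N → Fin s)).filter fun v =>
          ε ≤ discreteDisc ℓ v).card : ℝ) < δ * (s : ℝ) ^ N :=
  stmt8_general s hs ℓ ε δ hε hδ
end

section
/- Given a positive real number ε, there is an N₀ such that for all N ≥ N₀, the number of binary strings v = (v₁,…,v_N) ∈ {0,1}^N satisfying (1/(2N))·#{m : 0 ≤ m < 2N and {2^m η_v} ∈ [0,1/2)} ≥ 5/8 is strictly greater than (1−ε)·2^N, where η_v = Σ_{j=1}^N v_j 4^{−j}. -/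
open Finset

/- For `v = (v₁,…,v_N) ∈ {0,1}^N`, `η_v = Σ_{j=1}^N v_j 4^{−j}`; here `v i` is `v_{i+1}`.
The count is of `m` with `0 ≤ m < 2N` and `{2^m η_v} ∈ [0, 1/2)`. -/
open Classical in
noncomputable def goodCount (N : ℕ) : ℕ :=
  ((Finset.univ : Finset (Fin N → Fin 2)).filter fun v =>
    (5 : ℝ) / 8 ≤ 1 / (2 * (N : ℝ)) *
      (((Finset.range (2 * N)).filter fun m =>
        Int.fract ((2 : ℝ) ^ m * ∑ j : Fin N, (v j : ℝ) * ((4 : ℝ) ^ ((j : ℕ) + 1))⁻¹)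
          ∈ Set.Ico (0 : ℝ) (1 / 2)).card : ℝ)).card

/-! Since the digits of `η_v` in base 4 are `0` or `1`, its binary digits at places `2k + 1, 2k + 2`
are `0, v_{k+1}`. Thus `{4^k η_v}` is the base-4 tail `0.v_{k+1}v_{k+2}…`, which lies in `[0, 1/3]`,
and `{2 · 4^k η_v}` is twice that tail, so it is below `1/2` exactly when `v_{k+1} = 0`. The count
is therefore `N + #{zeros of v}`, and `v` is good iff at least a quarter of its digits vanish.
With signs `±1` for the digits, the signed sum `S v` satisfies `Σ_v (S v)² = N · 2^N` because
distinct signs are orthogonal, while a bad `v` has `(S v)² > N² / 4`; by Chebyshev there are at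
most `4 · 2^N / N` bad strings. -/

noncomputable def quatSum (d : ℕ → ℕ) (n : ℕ) : ℝ :=
  ∑ j ∈ range n, (d j : ℝ) * ((4 : ℝ) ^ (j + 1))⁻¹

namespace quatSum

variable (d : ℕ → ℕ)

lemma nonneg (n : ℕ) : 0 ≤ quatSum d n :=
  sum_nonneg fun _ _ => by positivity

lemma four_mul_succ (n : ℕ) :
    4 * quatSum d (n + 1) = d 0 + quatSum (fun j => d (j + 1)) n := by
  simp only [quatSum, sum_range_succ', mul_add, mul_sum, pow_succ]
  field_simp
  ring

lemma le_third {d : ℕ → ℕ} (hd : ∀ j, d j ≤ 1) (n : ℕ) : quatSum d n ≤ 1 / 3 := by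
  induction n generalizing d with
  | zero => simp [quatSum]
  | succ n ih =>
    have h0 : (d 0 : ℝ) ≤ 1 := by exact_mod_cast hd 0
    linarith [four_mul_succ d n, ih fun j => hd (j + 1)]

lemma lt_quarter_iff {d : ℕ → ℕ} (hd : ∀ j, d j ≤ 1) (n : ℕ) :
    quatSum d (n + 1) < 1 / 4 ↔ d 0 = 0 := by
  have hsucc := four_mul_succ d n
  have htail := le_third (fun j => hd (j + 1)) n
  have htail₀ := nonneg (fun j => d (j + 1)) n
  rcases Nat.le_one_iff_eq_zero_or_eq_one.mp (hd 0) with h | h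
  · simp only [h, Nat.cast_zero, iff_true] at hsucc ⊢
    linarith
  · simp only [h, Nat.cast_one, one_ne_zero, iff_false, not_lt] at hsucc ⊢
    linarith

lemma exists_four_pow_mul_eq {k n : ℕ} (hk : k ≤ n) :
    ∃ A : ℕ, 4 ^ k * quatSum d n = A + quatSum (fun j => d (j + k)) (n - k) := by
  induction k with
  | zero => exact ⟨0, by simp⟩
  | succ k ih =>
    obtain ⟨A, hA⟩ := ih (by omega)
    have hnk : n - k = n - (k + 1) + 1 := by omega
    refine ⟨4 * A + d k, ?_⟩
    rw [pow_succ', mul_assoc, hA, hnk, mul_add, four_mul_succ]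
    simp only [zero_add, add_right_comm _ 1 k, ← add_assoc]
    push_cast
    ring

lemma fract_four_pow_mul {d : ℕ → ℕ} (hd : ∀ j, d j ≤ 1) {k n : ℕ} (hk : k ≤ n) :
    Int.fract (4 ^ k * quatSum d n) = quatSum (fun j => d (j + k)) (n - k) := by
  obtain ⟨A, hA⟩ := exists_four_pow_mul_eq d hk
  rw [hA, Int.fract_natCast_add, Int.fract_eq_self]
  exact ⟨nonneg _ _, (le_third (fun j => hd (j + k)) _).trans_lt (by norm_num)⟩

lemma fract_two_mul_four_pow_mul {d : ℕ → ℕ} (hd : ∀ j, d j ≤ 1) {k n : ℕ} (hk : k ≤ n) :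
    Int.fract (2 * 4 ^ k * quatSum d n) = 2 * quatSum (fun j => d (j + k)) (n - k) := by
  obtain ⟨A, hA⟩ := exists_four_pow_mul_eq d hk
  rw [mul_assoc, hA, mul_add, show (2 : ℝ) * A = ((2 * A : ℕ) : ℝ) by push_cast; rfl,
    Int.fract_natCast_add, Int.fract_eq_self]
  have := le_third (fun j => hd (j + k)) (n - k)
  exact ⟨by linarith [nonneg (fun j => d (j + k)) (n - k)], by linarith⟩

end quatSum

lemma card_filter_range_two_mul (p : ℕ → Prop) [DecidablePred p] (n : ℕ) :
    #{m ∈ range (2 * n) | p m} = #{k ∈ range n | p (2 * k)} + #{k ∈ range n | p (2 * k + 1)} := by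
  simp only [card_filter]
  induction n with
  | zero => simp
  | succ n ih =>
    rw [mul_add, mul_one, sum_range_succ, sum_range_succ, ih, sum_range_succ, sum_range_succ]
    ring

def digitsOf {N : ℕ} (v : Fin N → Fin 2) (j : ℕ) : ℕ :=
  if h : j < N then v ⟨j, h⟩ else 0

lemma digitsOf_le_one {N : ℕ} (v : Fin N → Fin 2) (j : ℕ) : digitsOf v j ≤ 1 := by
  unfold digitsOf
  split
  · exact Nat.lt_succ_iff.mp (Fin.is_lt _)
  · exact Nat.zero_le _

lemma sum_fin_eq_quatSum_digitsOf {N : ℕ} (v : Fin N → Fin 2) :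
    ∑ j : Fin N, (v j : ℝ) * ((4 : ℝ) ^ ((j : ℕ) + 1))⁻¹ = quatSum (digitsOf v) N := by
  rw [quatSum, ← Fin.sum_univ_eq_sum_range (fun j => (digitsOf v j : ℝ) * ((4 : ℝ) ^ (j + 1))⁻¹)]
  simp [digitsOf]

lemma card_filter_range_digitsOf_eq_zero {N : ℕ} (v : Fin N → Fin 2) :
    #{k ∈ range N | digitsOf v k = 0} = #{i | v i = 0} := by
  simp only [card_filter]
  rw [← Fin.sum_univ_eq_sum_range (fun k => if digitsOf v k = 0 then 1 else 0)]
  refine sum_congr rfl fun i _ => ?_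
  simp only [digitsOf, i.is_lt, dite_true, Fin.eta]
  exact if_congr Fin.val_eq_zero_iff rfl rfl

lemma card_fract_two_pow_mul_lt_half {N : ℕ} (v : Fin N → Fin 2) :
    #{m ∈ range (2 * N) | Int.fract ((2 : ℝ) ^ m * quatSum (digitsOf v) N) ∈ Set.Ico 0 (1 / 2)}
      = N + #{i | v i = 0} := by
  have hd := digitsOf_le_one v
  rw [card_filter_range_two_mul, ← card_filter_range_digitsOf_eq_zero]
  congr 1
  · rw [filter_true_of_mem, card_range]
    intro k hk
    rw [pow_mul, show (2 : ℝ) ^ 2 = 4 by norm_num,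
      quatSum.fract_four_pow_mul hd (mem_range.mp hk).le]
    exact ⟨quatSum.nonneg _ _, (quatSum.le_third (fun j => hd (j + k)) _).trans_lt (by norm_num)⟩
  · refine congrArg card (filter_congr fun k hk => ?_)
    have hkN := mem_range.mp hk
    rw [pow_succ', pow_mul, show (2 : ℝ) ^ 2 = 4 by norm_num,
      quatSum.fract_two_mul_four_pow_mul hd hkN.le, show N - k = N - k - 1 + 1 by omega]
    have hlt := quatSum.lt_quarter_iff (fun j => hd (j + k)) (N - k - 1)
    have hnonneg := quatSum.nonneg (fun j => digitsOf v (j + k)) (N - k - 1 + 1)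
    rw [zero_add] at hlt
    rw [Set.mem_Ico, ← hlt]
    exact ⟨fun h => by linarith [h.2], fun h => ⟨by linarith, by linarith⟩⟩

lemma goodCount_eq {N : ℕ} (hN : 0 < N) :
    goodCount N = #{v : Fin N → Fin 2 | N ≤ 4 * #{i | v i = 0}} := by
  unfold goodCount
  refine congrArg card (filter_congr fun v _ => ?_)
  have hN' : (0 : ℝ) < 2 * N := by positivity
  rw [sum_fin_eq_quatSum_digitsOf, card_fract_two_pow_mul_lt_half, one_div, inv_mul_eq_div,
    le_div_iff₀ hN', ← Nat.cast_le (α := ℝ)]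
  push_cast
  constructor <;> intro h <;> linarith

def bitSign (a : Fin 2) : ℤ := if a = 0 then 1 else -1

lemma bitSign_add_one (a : Fin 2) : bitSign (a + 1) = -bitSign a := by
  fin_cases a <;> rfl

lemma bitSign_mul_self (a : Fin 2) : bitSign a * bitSign a = 1 := by
  fin_cases a <;> rfl

section Rademacher

variable {ι : Type*} [Fintype ι]

lemma sum_bitSign_eq (v : ι → Fin 2) :
    ∑ i, bitSign (v i) = 2 * #{i | v i = 0} - Fintype.card ι := by
  have h : ∀ a, bitSign a = 2 * (if a = 0 then 1 else 0) - 1 := by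
    intro a; fin_cases a <;> rfl
  simp only [h, sum_sub_distrib, ← mul_sum, natCast_card_filter]
  simp

lemma sum_bitSign_mul_bitSign_of_ne [DecidableEq ι] {i j : ι} (hij : i ≠ j) :
    ∑ v : ι → Fin 2, bitSign (v i) * bitSign (v j) = 0 := by
  have hflip := Fintype.sum_equiv (Equiv.addRight (Pi.single j 1))
    (fun v : ι → Fin 2 => bitSign (v i) * bitSign (v j))
    (fun v => -(bitSign (v i) * bitSign (v j))) fun v => by simp [hij, bitSign_add_one]
  rw [sum_neg_distrib] at hflip
  linarith

lemma sum_sq_sum_bitSign [DecidableEq ι] :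
    ∑ v : ι → Fin 2, (∑ i, bitSign (v i)) ^ 2 = Fintype.card ι * 2 ^ Fintype.card ι := by
  calc ∑ v : ι → Fin 2, (∑ i, bitSign (v i)) ^ 2
      = ∑ i, ∑ j, ∑ v : ι → Fin 2, bitSign (v i) * bitSign (v j) := by
        simp only [sq, sum_mul_sum]
        rw [sum_comm]
        exact sum_congr rfl fun i _ => sum_comm
    _ = ∑ _i : ι, (2 : ℤ) ^ Fintype.card ι := by
        refine sum_congr rfl fun i _ => ?_
        rw [sum_eq_single i (fun j _ hji => sum_bitSign_mul_bitSign_of_ne hji.symm) (by simp)]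
        simp [bitSign_mul_self]
    _ = Fintype.card ι * 2 ^ Fintype.card ι := by simp

lemma sq_card_le_four_mul_sq_sum_bitSign {v : ι → Fin 2}
    (hv : 4 * #{i | v i = 0} < Fintype.card ι) :
    (Fintype.card ι : ℤ) ^ 2 ≤ 4 * (∑ i, bitSign (v i)) ^ 2 := by
  have h : 4 * (#{i | v i = 0} : ℤ) + 1 ≤ Fintype.card ι := by exact_mod_cast hv
  rw [sum_bitSign_eq]
  nlinarith

lemma card_filter_four_mul_lt_mul_le [DecidableEq ι] :
    #{v : ι → Fin 2 | 4 * #{i | v i = 0} < Fintype.card ι} * Fintype.card ι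
      ≤ 4 * 2 ^ Fintype.card ι := by
  set bad := ({v : ι → Fin 2 | 4 * #{i | v i = 0} < Fintype.card ι} : Finset (ι → Fin 2))
  have hchebyshev :
      (#bad : ℤ) * Fintype.card ι ^ 2 ≤ 4 * (Fintype.card ι * 2 ^ Fintype.card ι) :=
    calc (#bad : ℤ) * Fintype.card ι ^ 2 = ∑ _v ∈ bad, (Fintype.card ι : ℤ) ^ 2 := by
          rw [sum_const, nsmul_eq_mul]
      _ ≤ ∑ v ∈ bad, 4 * (∑ i, bitSign (v i)) ^ 2 :=
          sum_le_sum fun v hv => sq_card_le_four_mul_sq_sum_bitSign (mem_filter.mp hv).2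
      _ ≤ ∑ v : ι → Fin 2, 4 * (∑ i, bitSign (v i)) ^ 2 :=
          sum_le_univ_sum_of_nonneg fun _ => by positivity
      _ = 4 * (Fintype.card ι * 2 ^ Fintype.card ι) := by rw [← mul_sum, sum_sq_sum_bitSign]
  rcases (Fintype.card ι).eq_zero_or_pos with h | h
  · rw [h, mul_zero]
    exact Nat.zero_le _
  · have hpos : (0 : ℤ) < Fintype.card ι := by exact_mod_cast h
    have : (#bad : ℤ) * Fintype.card ι ≤ 4 * 2 ^ Fintype.card ι :=
      le_of_mul_le_mul_right (by linarith) hpos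
    exact_mod_cast this

end Rademacher

theorem stmt9 (ε : ℝ) (hε : 0 < ε) :
    ∃ N₀ : ℕ, ∀ N ≥ N₀, (1 - ε) * 2 ^ N < (goodCount N : ℝ) := by
  refine ⟨⌈4 / ε⌉₊ + 1, fun N hN => ?_⟩
  have hN₀ : 0 < N := by omega
  have hεN : 4 < ε * N := by
    have h : 4 / ε < N := (Nat.le_ceil _).trans_lt (by exact_mod_cast Nat.lt_of_succ_le hN)
    rwa [div_lt_iff₀ hε, mul_comm] at h
  have hsplit := card_filter_add_card_filter_not (s := univ)
    fun v : Fin N → Fin 2 => N ≤ 4 * #{i | v i = 0}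
  have hbad := card_filter_four_mul_lt_mul_le (ι := Fin N)
  simp only [not_le, card_univ, Fintype.card_fun, Fintype.card_fin] at hsplit hbad
  rw [goodCount_eq hN₀]
  have hsplit' : (#{v : Fin N → Fin 2 | N ≤ 4 * #{i | v i = 0}} : ℝ)
      + #{v : Fin N → Fin 2 | 4 * #{i | v i = 0} < N} = 2 ^ N := by exact_mod_cast hsplit
  have hbad' : (#{v : Fin N → Fin 2 | 4 * #{i | v i = 0} < N} : ℝ) * N ≤ 4 * 2 ^ N := by
    exact_mod_cast hbad
  have h4 : (4 : ℝ) * 2 ^ N < ε * 2 ^ N * N := by nlinarith [pow_pos (two_pos (α := ℝ)) N]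
  have hN' : (0 : ℝ) < N := by exact_mod_cast hN₀
  have : (#{v : Fin N → Fin 2 | 4 * #{i | v i = 0} < N} : ℝ) < ε * 2 ^ N :=
    lt_of_mul_lt_mul_right (hbad'.trans_lt h4) hN'.le
  linarith
end

section
/- Let s₀ and s₁ be bases and suppose that I is an s₀-adic interval of length s₀^{−⟨b;s₀⟩} for a positive integer b. Then for a = b + ⌈log s₀ + 3 log s₁⌉, there is an s₁-adic subinterval of I of length s₁^{−⟨a;s₁⟩}. -/
open Finset Real

/-- `⟨b;r⟩ = ⌈b / log r⌉` where `log` is the natural logarithm. -/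
noncomputable def bRad (b r : ℕ) : ℕ := ⌈(b : ℝ) / Real.log r⌉₊

/-!
An `s₁`-adic grid of mesh `1/B` has a whole cell inside any interval of length `1/A` as soon as
`2A ≤ B`: take the first grid point to the right of the left endpoint. Since
`e^b ≤ r^⟨b;r⟩ < e^b r`, the extra `⌈log s₀ + 3 log s₁⌉` in `a` more than pays for the factor
`2 s₀` needed to get `2 s₀^⟨b;s₀⟩ ≤ s₁^⟨a;s₁⟩`.
-/

theorem exists_Ico_div_subset_Ico_div {A B c : ℕ} (hAB : 2 * A ≤ B) (hc : c < A) :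
    ∃ d < B, Set.Ico ((d : ℝ) / B) ((d + 1) / B) ⊆ Set.Ico ((c : ℝ) / A) ((c + 1) / A) := by
  have hA : (0 : ℝ) < A := by exact_mod_cast (c.zero_le.trans_lt hc)
  have hB : (0 : ℝ) < B := by exact_mod_cast (show 0 < B by omega)
  have hAB' : 2 * (A : ℝ) ≤ B := by exact_mod_cast hAB
  have hc' : (c : ℝ) + 1 ≤ A := by exact_mod_cast hc
  set d := ⌈(c : ℝ) * B / A⌉₊
  have hd_ge : (c : ℝ) * B ≤ d * A := (div_le_iff₀ hA).1 (Nat.le_ceil _)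
  have hd_lt : (d : ℝ) * A < c * B + A := by
    have := Nat.ceil_lt_add_one (show 0 ≤ (c : ℝ) * B / A by positivity)
    rwa [← lt_div_iff₀ hA, add_div, div_self hA.ne']
  have hright : ((d : ℝ) + 1) * A ≤ (c + 1) * B := by nlinarith
  refine ⟨d, ?_, Set.Ico_subset_Ico ?_ ?_⟩
  · have : ((d : ℝ) + 1) * A ≤ B * A := by nlinarith
    exact_mod_cast (le_of_mul_le_mul_right this hA : (d : ℝ) + 1 ≤ B)
  · rw [div_le_div_iff₀ hA hB]; linarith
  · rwa [div_le_div_iff₀ hB hA]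

theorem pow_eq_exp_mul_log {r : ℕ} (hr : 0 < r) (n : ℕ) : (r : ℝ) ^ n = exp (n * log r) := by
  rw [Real.exp_nat_mul, Real.exp_log (by exact_mod_cast hr)]

theorem exp_le_pow_bRad (b : ℕ) {r : ℕ} (hr : 1 < r) : exp b ≤ (r : ℝ) ^ bRad b r := by
  have hlog : 0 < log r := Real.log_pos (by exact_mod_cast hr)
  rw [pow_eq_exp_mul_log (by omega), exp_le_exp, ← div_le_iff₀ hlog]
  exact Nat.le_ceil _

theorem pow_bRad_lt_exp_mul (b : ℕ) {r : ℕ} (hr : 1 < r) : (r : ℝ) ^ bRad b r < exp b * r := by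
  have hlog : 0 < log r := Real.log_pos (by exact_mod_cast hr)
  have hceil : (bRad b r : ℝ) < b / log r + 1 := Nat.ceil_lt_add_one (by positivity)
  rw [pow_eq_exp_mul_log (by omega), show exp b * r = exp (b + log r) by
    rw [exp_add, exp_log (by positivity)], exp_lt_exp]
  calc (bRad b r : ℝ) * log r < (b / log r + 1) * log r := mul_lt_mul_of_pos_right hceil hlog
    _ = b + log r := by field_simp

theorem two_mul_pow_bRad_le (b : ℕ) {s₀ s₁ : ℕ} (hs₀ : 1 < s₀) (hs₁ : 2 ≤ s₁) :
    2 * (s₀ : ℝ) ^ bRad b s₀ ≤ (s₁ : ℝ) ^ bRad (b + ⌈log s₀ + 3 * log s₁⌉₊) s₁ := by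
  have hlog₂ : log 2 ≤ log s₁ := Real.log_le_log two_pos (by exact_mod_cast hs₁)
  have hexp : (b : ℝ) + log s₀ + log 2 ≤ ↑(b + ⌈log s₀ + 3 * log s₁⌉₊) := by
    push_cast
    linarith [Nat.le_ceil (log s₀ + 3 * log s₁), Real.log_pos (show (1 : ℝ) < 2 by norm_num)]
  calc 2 * (s₀ : ℝ) ^ bRad b s₀ ≤ 2 * (exp b * s₀) := by
        gcongr; exact (pow_bRad_lt_exp_mul b hs₀).le
    _ = exp (b + log s₀ + log 2) := by
        rw [exp_add, exp_add, exp_log (by positivity), exp_log two_pos]; ring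
    _ ≤ exp ↑(b + ⌈log s₀ + 3 * log s₁⌉₊) := exp_le_exp.2 hexp
    _ ≤ _ := exp_le_pow_bRad _ (by omega)

theorem stmt14_general (s₀ s₁ : ℕ) (hs₀ : 2 ≤ s₀) (hs₁ : 2 ≤ s₁) (b : ℕ)
    (c : ℕ) (hc : c < s₀ ^ bRad b s₀) :
    ∃ d : ℕ, d < s₁ ^ bRad (b + ⌈Real.log s₀ + 3 * Real.log s₁⌉₊) s₁ ∧
      Set.Ico ((d : ℝ) / (s₁ : ℝ) ^ bRad (b + ⌈Real.log s₀ + 3 * Real.log s₁⌉₊) s₁)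
          (((d : ℝ) + 1) / (s₁ : ℝ) ^ bRad (b + ⌈Real.log s₀ + 3 * Real.log s₁⌉₊) s₁)
        ⊆ Set.Ico ((c : ℝ) / (s₀ : ℝ) ^ bRad b s₀) (((c : ℝ) + 1) / (s₀ : ℝ) ^ bRad b s₀) := by
  have hgrid := two_mul_pow_bRad_le b (by omega : 1 < s₀) hs₁
  simp only [← Nat.cast_pow] at hgrid ⊢
  exact exists_Ico_div_subset_Ico_div (by exact_mod_cast hgrid) hc

theorem stmt14 (s₀ s₁ : ℕ) (hs₀ : 2 ≤ s₀) (hs₁ : 2 ≤ s₁) (b : ℕ) (hb : 0 < b)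
    (c : ℕ) (hc : c < s₀ ^ bRad b s₀) :
    ∃ d : ℕ, d < s₁ ^ bRad (b + ⌈Real.log s₀ + 3 * Real.log s₁⌉₊) s₁ ∧
      Set.Ico ((d : ℝ) / (s₁ : ℝ) ^ bRad (b + ⌈Real.log s₀ + 3 * Real.log s₁⌉₊) s₁)
          (((d : ℝ) + 1) / (s₁ : ℝ) ^ bRad (b + ⌈Real.log s₀ + 3 * Real.log s₁⌉₊) s₁)
        ⊆ Set.Ico ((c : ℝ) / (s₀ : ℝ) ^ bRad b s₀) (((c : ℝ) + 1) / (s₀ : ℝ) ^ bRad b s₀) :=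
  stmt14_general s₀ s₁ hs₀ hs₁ b c hc
end
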